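/- arXiv:2003.13777 — 6 statements merged into one kernel-verified Lean document; each statement's English description precedes it below -/
import Mathlib

section
/- For every tree T, every family of pairwise independent (≤2)-separations of T has size at most β(T). -/
/-!
Every separation `(A, B)` of order at most two of a tree has a private vertex `x ∈ A \ B` of
degree at most two: root the tree at a vertex `r` outside `A \ B` (in the separator if it is
nonempty) and take the vertex of `A \ B` farthest from `r`. Its neighbours other than its parent
are farther from `r`, so they lie in the separator minus `r`, which has at most one vertex.
For independent separations these private vertices are distinct, since the private parts are
disjoint, and pairwise non-adjacent, since an edge between private vertices of `(A, B)` and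
`(C, D)` would lie in both `A⁻` and `C⁻`.
-/

open SimpleGraph

/-- `(A, B)` is a `k`-separation of `H`: edge-disjoint subgraphs whose union is `H`,
with `V(A) \ V(B)` and `V(B) \ V(A)` nonempty and `|V(A) ∩ V(B)| = k`. -/
def IsSeparation {V : Type*} (H : SimpleGraph V) (A B : H.Subgraph) (k : ℕ) : Prop :=
  Disjoint A.edgeSet B.edgeSet ∧ A ⊔ B = ⊤ ∧
    (A.verts \ B.verts).Nonempty ∧ (B.verts \ A.verts).Nonempty ∧
    (A.verts ∩ B.verts).ncard = k

/-- `(A, B)` is a `(≤2)`-separation of `H`. -/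
def IsSepLE2 {V : Type*} (H : SimpleGraph V) (A B : H.Subgraph) : Prop :=
  ∃ k ≤ 2, IsSeparation H A B k

/-- The edge set of `A⁻`: the edges of `A` except those joining two vertices
of `V(A) ∩ V(B)`. -/
def sepMinusEdges {V : Type*} {H : SimpleGraph V} (A B : H.Subgraph) : Set (Sym2 V) :=
  {e | e ∈ A.edgeSet ∧ ¬ ∀ v ∈ e, v ∈ A.verts ∩ B.verts}

/-- Separations `(A,B)` and `(C,D)` are independent. -/
def IndepSeps {V : Type*} {H : SimpleGraph V} (A B C D : H.Subgraph) : Prop :=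
  sepMinusEdges A B ∩ sepMinusEdges C D = ∅ ∧
    (A.verts \ B.verts) ∩ (C.verts \ D.verts) = ∅

/-- `β(T)`: the maximum size of a stable set in the subgraph of `T` induced by the
vertices of degree at most 2. -/
noncomputable def beta {V : Type*} (T : SimpleGraph V) : ℕ :=
  sSup {n | ∃ S : Set V, S.ncard = n ∧ (∀ v ∈ S, (T.neighborSet v).ncard ≤ 2) ∧
    (∀ u ∈ S, ∀ w ∈ S, ¬ T.Adj u w)}

namespace SimpleGraph

variable {V : Type*} {G : SimpleGraph V}

lemma Walk.dist_le_length_of_mem_support {u v x : V} (p : G.Walk u v) (hx : x ∈ p.support) :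
    G.dist u x ≤ p.length := by
  classical
  exact (dist_le (p.takeUntil x hx)).trans (p.length_takeUntil_le_length hx)

lemma IsTree.subsingleton_setOf_adj_dist_lt (hG : G.IsTree) (r w : V) :
    {u | G.Adj w u ∧ G.dist r u < G.dist r w}.Subsingleton := by
  obtain ⟨p, hp, -⟩ := hG.connected.exists_path_of_dist r w
  suffices ∀ u, G.Adj w u → G.dist r u < G.dist r w → u = p.penultimate from
    fun u₁ h₁ u₂ h₂ => (this u₁ h₁.1 h₁.2).trans (this u₂ h₂.1 h₂.2).symm
  intro u hadj hlt
  obtain ⟨q, hq, hqd⟩ := hG.connected.exists_path_of_dist r u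
  have hw : w ∉ q.support := fun hw => by
    have := q.dist_le_length_of_mem_support hw
    omega
  exact hG.isAcyclic.eq_penultimate_of_adj_end hp hadj
    (hG.isAcyclic.mem_support_of_ne_mem_support_of_adj_of_isPath hp hq hadj hw)

lemma IsTree.exists_ncard_neighborSet_le_two [Finite V] (hG : G.IsTree) {W X : Set V} {r : V}
    (hW : W.Nonempty) (hr : r ∉ W) (hX : (X \ {r}).ncard ≤ 1)
    (hnbr : ∀ w ∈ W, ∀ u, G.Adj w u → u ∈ W ∪ X) :
    ∃ w ∈ W, (G.neighborSet w).ncard ≤ 2 := by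
  obtain ⟨w, hwW, hmax⟩ := W.exists_max_image (G.dist r) W.toFinite hW
  refine ⟨w, hwW, ?_⟩
  have hsub : G.neighborSet w ⊆ {u | G.Adj w u ∧ G.dist r u < G.dist r w} ∪ (X \ {r}) := by
    intro u hu
    rcases hG.dist_eq_dist_add_one_of_adj r hu with h | h
    · exact Or.inl ⟨hu, by omega⟩
    · have huW : u ∉ W := fun huW => by
        have := hmax u huW
        omega
      refine Or.inr ⟨(hnbr w hwW u hu).resolve_left huW, ?_⟩
      rintro rfl
      simp at h
  have hparent := Set.ncard_le_one_iff_subsingleton.mpr (hG.subsingleton_setOf_adj_dist_lt r w)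
  calc (G.neighborSet w).ncard
      ≤ ({u | G.Adj w u ∧ G.dist r u < G.dist r w} ∪ (X \ {r})).ncard := Set.ncard_le_ncard hsub
    _ ≤ {u | G.Adj w u ∧ G.dist r u < G.dist r w}.ncard + (X \ {r}).ncard := Set.ncard_union_le _ _
    _ ≤ 2 := by omega

lemma Subgraph.adj_of_sup_eq_top {A B : G.Subgraph} (hAB : A ⊔ B = ⊤) {v u : V}
    (hv : v ∉ B.verts) (h : G.Adj v u) : A.Adj v u := by
  have : (A ⊔ B).Adj v u := hAB ▸ Subgraph.top_adj.mpr h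
  exact this.resolve_right fun hB => hv hB.fst_mem

end SimpleGraph

section Separation

variable {V : Type*} {H : SimpleGraph V} {A B C D : H.Subgraph}

lemma IsSepLE2.sup_eq_top (h : IsSepLE2 H A B) : A ⊔ B = ⊤ := by
  obtain ⟨-, -, -, hAB, -⟩ := h
  exact hAB

lemma IsSepLE2.exists_mem_diff_ncard_neighborSet_le_two [Finite V] (hH : H.IsTree)
    (h : IsSepLE2 H A B) : ∃ x ∈ A.verts \ B.verts, (H.neighborSet x).ncard ≤ 2 := by
  obtain ⟨k, hk, -, hAB, hA, ⟨b, hbB, hbA⟩, hcard⟩ := h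
  obtain ⟨r, hrW, hrX⟩ :
      ∃ r ∉ A.verts \ B.verts, ((A.verts ∩ B.verts) \ {r}).ncard ≤ 1 := by
    rcases (A.verts ∩ B.verts).eq_empty_or_nonempty with hX | ⟨r, hr⟩
    · exact ⟨b, fun hb => hbA hb.1, by simp [hX]⟩
    · exact ⟨r, fun h => h.2 hr.2, by rw [Set.ncard_sdiff_singleton_of_mem hr]; omega⟩
  refine hH.exists_ncard_neighborSet_le_two hA hrW hrX fun w hw u hwu => ?_
  have hu : u ∈ A.verts := (Subgraph.adj_of_sup_eq_top hAB hw.2 hwu).snd_mem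
  by_cases huB : u ∈ B.verts
  · exact Or.inr ⟨hu, huB⟩
  · exact Or.inl ⟨hu, huB⟩

lemma mem_sepMinusEdges_of_adj {x y : V} (hxy : A.Adj x y) (hx : x ∉ B.verts) :
    s(x, y) ∈ sepMinusEdges A B :=
  ⟨hxy, fun hall => hx (hall x (Sym2.mem_mk_left x y)).2⟩

lemma IndepSeps.ne_of_mem_diff (h : IndepSeps A B C D) {x y : V}
    (hx : x ∈ A.verts \ B.verts) (hy : y ∈ C.verts \ D.verts) : x ≠ y := by
  rintro rfl
  exact Set.eq_empty_iff_forall_notMem.mp h.2 x ⟨hx, hy⟩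

lemma IndepSeps.not_adj_of_mem_diff (h : IndepSeps A B C D) (hAB : A ⊔ B = ⊤)
    (hCD : C ⊔ D = ⊤) {x y : V} (hx : x ∈ A.verts \ B.verts) (hy : y ∈ C.verts \ D.verts) :
    ¬ H.Adj x y := fun hxy => by
  have hA := mem_sepMinusEdges_of_adj (Subgraph.adj_of_sup_eq_top hAB hx.2 hxy) hx.2
  have hC := mem_sepMinusEdges_of_adj (Subgraph.adj_of_sup_eq_top hCD hy.2 hxy.symm) hy.2
  rw [Sym2.eq_swap] at hC
  exact Set.eq_empty_iff_forall_notMem.mp h.1 _ ⟨hA, hC⟩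

end Separation

lemma ncard_le_beta {V : Type*} [Finite V] {T : SimpleGraph V} {S : Set V}
    (hdeg : ∀ v ∈ S, (T.neighborSet v).ncard ≤ 2) (hS : ∀ u ∈ S, ∀ w ∈ S, ¬ T.Adj u w) :
    S.ncard ≤ beta T :=
  le_csSup ⟨Nat.card V, by rintro _ ⟨S, rfl, -, -⟩; exact Set.ncard_le_card S⟩ ⟨S, rfl, hdeg, hS⟩

/-- For every tree `T`, every family of pairwise independent `(≤2)`-separations of `T`
has size at most `β(T)`. -/
theorem stmt2 {V : Type*} [Fintype V] (T : SimpleGraph V) (hT : T.IsTree)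
    (n : ℕ) (F : Fin n → T.Subgraph × T.Subgraph)
    (hsep : ∀ i, IsSepLE2 T (F i).1 (F i).2)
    (hind : ∀ i j, i ≠ j → IndepSeps (F i).1 (F i).2 (F j).1 (F j).2) :
    n ≤ beta T := by
  choose v hv hdeg using fun i => (hsep i).exists_mem_diff_ncard_neighborSet_le_two hT
  have hinj : Function.Injective v := fun i j hij => by
    by_contra hne
    exact (hind i j hne).ne_of_mem_diff (hv i) (hv j) hij
  have hstable : ∀ i j, ¬ T.Adj (v i) (v j) := fun i j hadj => by
    rcases eq_or_ne i j with rfl | hne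
    · exact hadj.ne rfl
    · exact (hind i j hne).not_adj_of_mem_diff (hsep i).sup_eq_top (hsep j).sup_eq_top
        (hv i) (hv j) hadj
  calc n = (Set.range v).ncard := by rw [Set.ncard_range_of_injective hinj, Nat.card_fin]
    _ ≤ beta T := ncard_le_beta (by rintro _ ⟨i, rfl⟩; exact hdeg i)
      (by rintro _ ⟨i, rfl⟩ _ ⟨j, rfl⟩; exact hstable i j)
end

section
/- Let J be a graph and let (J₁,J₂) and (J₁′,J₂′) be two pairs of subgraphs of J with J₁ ∪ J₂ = J and J₁′ ∪ J₂′ = J. For a,b ∈ {1,2} define J_{a,b}¹ := J_a ∩ J_b′ and J_{a,b}² := J_{3−a} ∪ J_{3−b}′. Then for all a,b ∈ {1,2}: |V(J_{a,b}¹) ∩ V(J_{a,b}²)| + |V(J_{3−a,3−b}¹) ∩ V(J_{3−a,3−b}²)| ≤ |V(J₁) ∩ V(J₂)| + |V(J₁′) ∩ V(J₂′)|. -/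
open SimpleGraph

theorem Set.ncard_add_ncard_le_of_union_subset_of_inter_subset {α : Type*} {S T X Y : Set α}
    (hX : X.Finite) (hY : Y.Finite) (hunion : S ∪ T ⊆ X ∪ Y) (hinter : S ∩ T ⊆ X ∩ Y) :
    S.ncard + T.ncard ≤ X.ncard + Y.ncard := by
  have hST : (S ∪ T).Finite := (hX.union hY).subset hunion
  rw [← Set.ncard_union_add_ncard_inter S T (hST.subset subset_union_left)
      (hST.subset subset_union_right), ← Set.ncard_union_add_ncard_inter X Y hX hY]
  exact Nat.add_le_add (Set.ncard_le_ncard hunion (hX.union hY))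
    (Set.ncard_le_ncard hinter (hX.inter_of_left Y))

theorem Set.ncard_corner_add_ncard_opposite_corner_le {α : Type*} {A A' B B' : Set α}
    (hA : (A ∩ A').Finite) (hB : (B ∩ B').Finite) :
    (A ∩ B ∩ (A' ∪ B')).ncard + (A' ∩ B' ∩ (A ∪ B)).ncard ≤
      (A ∩ A').ncard + (B ∩ B').ncard := by
  apply Set.ncard_add_ncard_le_of_union_subset_of_inter_subset hA hB
  · rintro x (⟨⟨hA, hB⟩, hA' | hB'⟩ | ⟨⟨hA', hB'⟩, hA | hB⟩)
    exacts [Or.inl ⟨hA, hA'⟩, Or.inr ⟨hB, hB'⟩, Or.inl ⟨hA, hA'⟩, Or.inr ⟨hB, hB'⟩]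
  · rintro x ⟨⟨⟨hA, hB⟩, -⟩, ⟨hA', hB'⟩, -⟩
    exact ⟨⟨hA, hA'⟩, hB, hB'⟩

theorem Bool.inter_true_false_eq {α : Type*} (f : Bool → Set α) (a : Bool) :
    f true ∩ f false = f a ∩ f !a := by
  cases a
  exacts [Set.inter_comm _ _, rfl]

theorem stmt5_general {V : Type*} [Fintype V] {J : SimpleGraph V}
    (P Q : Bool → J.Subgraph) :
    ∀ a b : Bool,
      ((P a ⊓ Q b).verts ∩ (P (!a) ⊔ Q (!b)).verts).ncard +
        ((P (!a) ⊓ Q (!b)).verts ∩ (P a ⊔ Q b).verts).ncard ≤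
      ((P true).verts ∩ (P false).verts).ncard +
        ((Q true).verts ∩ (Q false).verts).ncard := by
  intro a b
  rw [Bool.inter_true_false_eq (fun c ↦ (P c).verts) a,
    Bool.inter_true_false_eq (fun c ↦ (Q c).verts) b]
  simp only [Subgraph.verts_sup, Subgraph.verts_inf]
  exact Set.ncard_corner_add_ncard_opposite_corner_le (Set.toFinite _) (Set.toFinite _)

/-- Submodularity-type inequality for crossings of two separations: if `J₁ ∪ J₂ = J` and
`J₁′ ∪ J₂′ = J` (as subgraphs), then for all `a, b ∈ {1,2}`,
`|V(J_a ∩ J_b′) ∩ V(J_{3−a} ∪ J_{3−b}′)| + |V(J_{3−a} ∩ J_{3−b}′) ∩ V(J_a ∪ J_b′)|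
  ≤ |V(J₁) ∩ V(J₂)| + |V(J₁′) ∩ V(J₂′)|`.
Here the two pairs are encoded as `P, Q : Bool → J.Subgraph`. -/
theorem stmt5 {V : Type*} [Fintype V] {J : SimpleGraph V}
    (P Q : Bool → J.Subgraph)
    (hP : P true ⊔ P false = ⊤) (hQ : Q true ⊔ Q false = ⊤) :
    ∀ a b : Bool,
      ((P a ⊓ Q b).verts ∩ (P (!a) ⊔ Q (!b)).verts).ncard +
        ((P (!a) ⊓ Q (!b)).verts ∩ (P a ⊔ Q b).verts).ncard ≤
      ((P true).verts ∩ (P false).verts).ncard +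
        ((Q true).verts ∩ (Q false).verts).ncard :=
  stmt5_general P Q
end

section
/- Let g ≥ 1 be an integer and let G be a graph with n ≥ 1 vertices such that every subgraph H of G satisfies |E(H)| ≤ 3(|V(H)| + g). Then the number of copies of K₃ (triangles) in G is at most (21/2)·g^{3/2} + 18n + 36g·(ln n + 1). -/
/-!
Any vertex set `s` spans at most `3(|s| + g)` edges, so it has a vertex `v` whose degree `d`
inside `s` satisfies `|s| d ≤ 6(|s| + g)`, besides `d < |s|`. Deleting `v` destroys at most
`C(d, 2) ≤ min(C(|s| - 1, 2), (6 + 6g/|s|)² / 2)` triangles, and peeling the vertices one at a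
time bounds the number of triangles by the sum of these minima over `|s| = 1, …, n`. Splitting
that sum at `S = ⌈2√g⌉`, the first part is at most `C(S, 3) ≤ S³/6` and the rest at most
`18n + 36g ln n + 18g²/S`.
-/

open Finset SimpleGraph

noncomputable def minDegreeTriangleBound (g k : ℕ) : ℝ :=
  min ((k - 1).choose 2) ((6 + 6 * g / k) ^ 2 / 2)

lemma choose_two_le_minDegreeTriangleBound {g k d : ℕ} (hdk : d < k)
    (hkd : k * d ≤ 6 * (k + g)) : (d.choose 2 : ℝ) ≤ minDegreeTriangleBound g k := by
  have hk : (k : ℝ) ≠ 0 := Nat.cast_ne_zero.2 (by omega)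
  refine le_min (by exact_mod_cast Nat.choose_le_choose 2 (Nat.le_sub_one_of_lt hdk)) ?_
  have hd : (d : ℝ) ≤ 6 + 6 * g / k :=
    calc (d : ℝ) = k * d / k := by field_simp
      _ ≤ 6 * (k + g) / k := by gcongr ?_ / _; exact_mod_cast hkd
      _ = 6 + 6 * g / k := by field_simp
  rw [Nat.cast_choose_two]
  nlinarith [Nat.cast_nonneg (α := ℝ) d]

lemma minDegreeTriangleBound_le_choose (g k : ℕ) :
    minDegreeTriangleBound g k ≤ (k - 1).choose 2 :=
  min_le_left _ _

lemma minDegreeTriangleBound_le {g k : ℕ} (hk : k ≠ 0) :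
    minDegreeTriangleBound g k ≤ 18 + 36 * g * (k : ℝ)⁻¹ + 18 * g ^ 2 * ((k : ℝ) ^ 2)⁻¹ :=
  (min_le_right _ _).trans_eq (by field_simp; ring)

lemma sum_Ioc_choose_sub_one_two (n : ℕ) : ∑ k ∈ Ioc 0 n, (k - 1).choose 2 = n.choose 3 := by
  induction n with
  | zero => rfl
  | succ n ih =>
    rw [sum_Ioc_succ_top n.zero_le, ih, Nat.add_sub_cancel, Nat.choose_succ_succ', add_comm]

lemma sum_Ioc_inv_le_log {m n : ℕ} (hm : m ≠ 0) (hmn : m ≤ n) :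
    ∑ k ∈ Ioc m n, (k : ℝ)⁻¹ ≤ Real.log n := by
  have hhead : (1 : ℝ) ≤ ∑ k ∈ Ioc 0 m, (k : ℝ)⁻¹ := by
    simpa using single_le_sum (f := fun k : ℕ => (k : ℝ)⁻¹) (fun _ _ => by positivity)
      (show 1 ∈ Ioc 0 m by simp; omega)
  have hharm : ∑ k ∈ Ioc 0 n, (k : ℝ)⁻¹ ≤ 1 + Real.log n := by
    simpa [harmonic_eq_sum_Icc, ← Icc_add_one_left_eq_Ioc] using harmonic_le_one_add_log n
  linarith [sum_Ioc_consecutive (fun k : ℕ => (k : ℝ)⁻¹) m.zero_le hmn]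

lemma sum_minDegreeTriangleBound_le_cube (g n : ℕ) :
    ∑ k ∈ Ioc 0 n, minDegreeTriangleBound g k ≤ (n : ℝ) ^ 3 / 6 :=
  calc ∑ k ∈ Ioc 0 n, minDegreeTriangleBound g k
      ≤ ∑ k ∈ Ioc 0 n, ((k - 1).choose 2 : ℝ) :=
        sum_le_sum fun k _ => minDegreeTriangleBound_le_choose g k
    _ = (n.choose 3 : ℝ) := by exact_mod_cast sum_Ioc_choose_sub_one_two n
    _ ≤ (n : ℝ) ^ 3 / 6 := Nat.choose_le_pow_div 3 n

lemma sum_minDegreeTriangleBound_le {m : ℕ} (hm : m ≠ 0) (g n : ℕ) :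
    ∑ k ∈ Ioc 0 n, minDegreeTriangleBound g k ≤
      (m : ℝ) ^ 3 / 6 + 18 * n + 36 * g * Real.log n + 18 * g ^ 2 * (m : ℝ)⁻¹ := by
  rcases le_total n m with hnm | hmn
  · have hcube : (n : ℝ) ^ 3 / 6 ≤ (m : ℝ) ^ 3 / 6 := by gcongr
    have hlog := Real.log_natCast_nonneg n
    have hrest : 0 ≤ 18 * n + 36 * g * Real.log n + 18 * g ^ 2 * (m : ℝ)⁻¹ := by positivity
    linarith [sum_minDegreeTriangleBound_le_cube g n]
  have htail : ∑ k ∈ Ioc m n, minDegreeTriangleBound g k ≤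
      ∑ k ∈ Ioc m n, (18 + 36 * g * (k : ℝ)⁻¹ + 18 * g ^ 2 * ((k : ℝ) ^ 2)⁻¹) :=
    sum_le_sum fun k hk => minDegreeTriangleBound_le (by simp at hk; omega)
  rw [sum_add_distrib, sum_add_distrib, ← mul_sum, ← mul_sum, sum_const, Nat.card_Ioc,
    nsmul_eq_mul] at htail
  calc ∑ k ∈ Ioc 0 n, minDegreeTriangleBound g k
      = ∑ k ∈ Ioc 0 m, minDegreeTriangleBound g k + ∑ k ∈ Ioc m n, minDegreeTriangleBound g k :=
        (sum_Ioc_consecutive _ m.zero_le hmn).symm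
    _ ≤ (m : ℝ) ^ 3 / 6 + (((n - m : ℕ) : ℝ) * 18 + 36 * g * ∑ k ∈ Ioc m n, (k : ℝ)⁻¹ +
          18 * g ^ 2 * ∑ k ∈ Ioc m n, ((k : ℝ) ^ 2)⁻¹) :=
        add_le_add (sum_minDegreeTriangleBound_le_cube g m) htail
    _ ≤ (m : ℝ) ^ 3 / 6 + ((n : ℝ) * 18 + 36 * g * Real.log n + 18 * g ^ 2 * (m : ℝ)⁻¹) := by
        gcongr
        · exact_mod_cast n.sub_le m
        · exact sum_Ioc_inv_le_log hm hmn
        · exact (sum_Ioc_inv_sq_le_sub hm hmn).trans (sub_le_self _ (by positivity))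
    _ = _ := by ring

lemma sum_minDegreeTriangleBound_le_of_one_le {g : ℕ} (hg : 1 ≤ g) (n : ℕ) :
    ∑ k ∈ Ioc 0 n, minDegreeTriangleBound g k ≤
      (21 / 2) * (g : ℝ) ^ ((3 : ℝ) / 2) + 18 * n + 36 * g * (Real.log n + 1) := by
  set t := √(g : ℝ)
  have ht : 1 ≤ t := Real.one_le_sqrt.2 (by exact_mod_cast hg)
  have hgt : (g : ℝ) = t ^ 2 := (Real.sq_sqrt (Nat.cast_nonneg g)).symm
  have hlo : 2 * t ≤ ⌈2 * t⌉₊ := Nat.le_ceil _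
  have hhi : (⌈2 * t⌉₊ : ℝ) ≤ 2 * t + 1 := (Nat.ceil_lt_add_one (by positivity)).le
  have hfrac : 18 * (g : ℝ) ^ 2 * (⌈2 * t⌉₊ : ℝ)⁻¹ ≤ 9 * t ^ 3 :=
    calc 18 * (g : ℝ) ^ 2 * (⌈2 * t⌉₊ : ℝ)⁻¹ ≤ 18 * (g : ℝ) ^ 2 * (2 * t)⁻¹ := by gcongr
      _ = 9 * t ^ 3 := by rw [hgt]; field_simp; ring
  have hcube : (⌈2 * t⌉₊ : ℝ) ^ 3 ≤ (2 * t + 1) ^ 3 := by gcongr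
  have hpoly : (2 * t + 1) ^ 3 / 6 + 9 * t ^ 3 ≤ 21 / 2 * t ^ 3 + 36 * g := by
    rw [hgt]; nlinarith
  have hsum := sum_minDegreeTriangleBound_le (m := ⌈2 * t⌉₊) (by positivity) g n
  have h32 : (g : ℝ) ^ ((3 : ℝ) / 2) = t ^ 3 := by
    rw [Real.rpow_div_two_eq_sqrt _ (Nat.cast_nonneg g)]
    exact_mod_cast Real.rpow_natCast t 3
  rw [h32]
  linarith

namespace SimpleGraph

variable {V : Type*} (G : SimpleGraph V) [DecidableRel G.Adj]

lemma card_filter_adj_lt_card {s : Finset V} {v : V} (hv : v ∈ s) :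
    #{w ∈ s | G.Adj v w} < #s :=
  card_lt_card (filter_ssubset.2 ⟨v, hv, G.irrefl⟩)

lemma exists_mem_card_mul_card_filter_adj_le {s : Finset V} (hs : s.Nonempty) :
    ∃ v ∈ s, #s * #{w ∈ s | G.Adj v w} ≤ ∑ u ∈ s, #{w ∈ s | G.Adj u w} := by
  obtain ⟨v, hv, hmin⟩ := s.exists_min_image (fun u => #{w ∈ s | G.Adj u w}) hs
  exact ⟨v, hv, by simpa using card_nsmul_le_sum s _ _ hmin⟩

variable [Fintype V] [DecidableEq V]

lemma sum_card_filter_adj_eq (s : Finset V) :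
    ∑ u ∈ s, #{w ∈ s | G.Adj u w} = 2 * ((⊤ : G.Subgraph).induce s).edgeSet.ncard := by
  classical
  have hdeg (u : V) : ((⊤ : G.Subgraph).induce (s : Set V)).spanningCoe.degree u =
      if u ∈ s then #{w ∈ s | G.Adj u w} else 0 := by
    rw [← card_neighborFinset_eq_degree, neighborFinset_eq_filter]
    split_ifs with hu
    · congr 1; ext w; simp [hu]
    · simp [hu]
  rw [← Subgraph.edgeSet_spanningCoe, ← coe_edgeFinset, Set.ncard_coe_finset,
    ← sum_degrees_eq_twice_card_edges]
  simp only [hdeg, sum_ite_mem, univ_inter]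

lemma card_cliqueFinset_three_mem_le (s : Finset V) (v : V) :
    #{t ∈ G.cliqueFinset 3 | t ⊆ s ∧ v ∈ t} ≤ (#{w ∈ s | G.Adj v w}).choose 2 := by
  rw [← card_powersetCard]
  refine card_le_card_of_injOn (fun t => t.erase v) (fun t ht => ?_) (fun t₁ ht₁ t₂ ht₂ h => ?_)
  · obtain ⟨htri, hts, hvt⟩ := by simpa only [mem_coe, mem_filter, mem_cliqueFinset_iff] using ht
    rw [mem_coe, mem_powersetCard]
    refine ⟨fun w hw => ?_, by rw [card_erase_of_mem hvt, htri.card_eq]⟩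
    obtain ⟨hwv, hwt⟩ := mem_erase.1 hw
    exact mem_filter.2 ⟨hts hwt, htri.isClique hvt hwt (Ne.symm hwv)⟩
  · simp only [mem_coe, mem_filter] at ht₁ ht₂
    rw [← insert_erase ht₁.2.2, ← insert_erase ht₂.2.2]
    exact congrArg (insert v) h

lemma card_cliqueFinset_three_subset_le_erase (s : Finset V) (v : V) :
    #{t ∈ G.cliqueFinset 3 | t ⊆ s} ≤
      #{t ∈ G.cliqueFinset 3 | t ⊆ s.erase v} + (#{w ∈ s | G.Adj v w}).choose 2 := by
  rw [← card_filter_add_card_filter_not (fun t => v ∈ t), filter_filter, filter_filter]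
  simp_rw [← subset_erase]
  rw [add_comm]
  exact add_le_add_right (G.card_cliqueFinset_three_mem_le s v) _

lemma card_cliqueFinset_three_subset_le_sum {g : ℕ}
    (hE : ∀ H : G.Subgraph, H.edgeSet.ncard ≤ 3 * (H.verts.ncard + g)) (s : Finset V) :
    (#{t ∈ G.cliqueFinset 3 | t ⊆ s} : ℝ) ≤ ∑ k ∈ Ioc 0 #s, minDegreeTriangleBound g k := by
  induction s using Finset.strongInduction with
  | H s ih =>
    rcases s.eq_empty_or_nonempty with rfl | hs
    · have hne : ∀ t, G.IsNClique 3 t → t ≠ ∅ := by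
        rintro t ht rfl
        simpa using ht.card_eq
      simpa using hne
    obtain ⟨v, hv, hmin⟩ := G.exists_mem_card_mul_card_filter_adj_le hs
    have hdeg : #s * #{w ∈ s | G.Adj v w} ≤ 6 * (#s + g) := by
      have hedges := hE ((⊤ : G.Subgraph).induce s)
      rw [Subgraph.induce_verts, Set.ncard_coe_finset] at hedges
      rw [G.sum_card_filter_adj_eq] at hmin
      omega
    rw [← card_erase_add_one hv, sum_Ioc_succ_top (Nat.zero_le _), card_erase_add_one hv]
    calc (#{t ∈ G.cliqueFinset 3 | t ⊆ s} : ℝ)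
        ≤ #{t ∈ G.cliqueFinset 3 | t ⊆ s.erase v} + ((#{w ∈ s | G.Adj v w}).choose 2 : ℕ) := by
          exact_mod_cast G.card_cliqueFinset_three_subset_le_erase s v
      _ ≤ _ := add_le_add (ih _ (erase_ssubset hv))
          (choose_two_le_minDegreeTriangleBound (G.card_filter_adj_lt_card hv) hdeg)

end SimpleGraph

theorem stmt6_general {V : Type*} [Fintype V] [DecidableEq V]
    (G : SimpleGraph V) [DecidableRel G.Adj]
    (g : ℕ) (hg : 1 ≤ g)
    (hE : ∀ H : G.Subgraph, H.edgeSet.ncard ≤ 3 * (H.verts.ncard + g)) :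
    ((G.cliqueFinset 3).card : ℝ) ≤
      (21 / 2) * (g : ℝ) ^ ((3 : ℝ) / 2) + 18 * (Fintype.card V : ℝ) +
        36 * (g : ℝ) * (Real.log (Fintype.card V) + 1) := by
  have h := G.card_cliqueFinset_three_subset_le_sum hE univ
  rw [filter_true_of_mem fun t _ => subset_univ t, card_univ] at h
  exact h.trans (sum_minDegreeTriangleBound_le_of_one_le hg _)

/-- If `g ≥ 1` and every subgraph `H` of an `n`-vertex graph `G` (with `n ≥ 1`) satisfies
`|E(H)| ≤ 3(|V(H)| + g)`, then the number of triangles in `G` is at most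
`(21/2)·g^{3/2} + 18n + 36g(ln n + 1)`. -/
theorem stmt6 {V : Type*} [Fintype V] [DecidableEq V]
    (G : SimpleGraph V) [DecidableRel G.Adj]
    (g : ℕ) (hg : 1 ≤ g) (hn : 1 ≤ Fintype.card V)
    (hE : ∀ H : G.Subgraph, H.edgeSet.ncard ≤ 3 * (H.verts.ncard + g)) :
    ((G.cliqueFinset 3).card : ℝ) ≤
      (21 / 2) * (g : ℝ) ^ ((3 : ℝ) / 2) + 18 * (Fintype.card V : ℝ) +
        36 * (g : ℝ) * (Real.log (Fintype.card V) + 1) :=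
  stmt6_general G g hg hE
end

section
/- Let g ≥ 1 be an integer and let G be a graph with n ≥ 1 vertices such that every subgraph H of G satisfies |E(H)| ≤ 3(|V(H)| + g). Then the number of copies of K₄ in G is at most (283/24)·g² + 27·g^{3/2} + 108g·(ln n + 1) + 36n. -/
/-!
Delete the vertices one at a time, always a vertex of minimum degree among those remaining. When
`k` vertices remain, the hypothesis applied to the induced subgraph bounds the degree of the deleted
vertex by `min (k - 1) (6(k + g)/k)`, and each `K₄` is charged to its first deleted vertex, as a
triple of that vertex's remaining neighbours. So the number of `K₄`s is at most
`∑_{k ≤ n} C(min (k - 1) (6(k + g)/k), 3)`. Split this sum at `A = ⌈4√g⌉`: the terms with `k ≤ A`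
add up to at most `C(A, 4) ≤ (32/3) g²`, and each later term is at most `36 (1 + g/k)³`; summing
these with the harmonic bound and the telescoping bounds `∑_{k > A} k⁻² ≤ A⁻¹`,
`∑_{k > A} k⁻³ ≤ (2A²)⁻¹` gives `36n + 108g(ln n + 1) + 27 g^{3/2} + (9/8) g²`.
-/

open SimpleGraph Finset

namespace SimpleGraph

variable {V : Type*} [DecidableEq V] (G : SimpleGraph V) [DecidableRel G.Adj]

theorem sum_card_filter_adj_eq_two_mul_ncard_edgeSet_induce [Fintype V] (s : Finset V) :
    ∑ u ∈ s, #{v ∈ s | G.Adj u v} = 2 * ((⊤ : G.Subgraph).induce s).edgeSet.ncard := by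
  classical
  set H := ((⊤ : G.Subgraph).induce s).spanningCoe
  have h_deg : ∀ u, H.degree u = if u ∈ s then #{v ∈ s | G.Adj u v} else 0 := by
    intro u
    split_ifs with hu
    · rw [← card_neighborFinset_eq_degree]
      congr 1
      ext v
      simp [H, hu]
    · rw [degree_eq_zero_iff_notMem_support]
      simp [H, hu, SimpleGraph.support]
  rw [← Subgraph.edgeSet_spanningCoe, ← coe_edgeFinset, Set.ncard_coe_finset,
    ← sum_degrees_eq_twice_card_edges, sum_congr rfl fun u _ => h_deg u, sum_ite_mem, univ_inter]

theorem card_filter_adj_le_card_sub_one {s : Finset V} {v : V} (hv : v ∈ s) :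
    #{u ∈ s | G.Adj v u} ≤ #s - 1 := by
  rw [← card_erase_of_mem hv]
  exact card_le_card fun u hu => by
    rw [mem_filter] at hu
    exact mem_erase.2 ⟨hu.2.ne', hu.1⟩

theorem exists_card_filter_adj_le_of_ncard_edgeSet_le [Fintype V] {g : ℕ}
    (hE : ∀ H : G.Subgraph, H.edgeSet.ncard ≤ 3 * (H.verts.ncard + g)) {s : Finset V}
    (hs : s.Nonempty) : ∃ v ∈ s, #{u ∈ s | G.Adj v u} ≤ min (#s - 1) (6 * (#s + g) / #s) := by
  obtain ⟨v, hv, h_avg⟩ := exists_le_of_sum_le hs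
    (f := fun v => #{u ∈ s | G.Adj v u} * #s) (g := fun _ => ∑ u ∈ s, #{w ∈ s | G.Adj u w})
    (by rw [sum_const, smul_eq_mul, ← sum_mul, mul_comm])
  have h_sum : ∑ u ∈ s, #{w ∈ s | G.Adj u w} ≤ 6 * (#s + g) := by
    have := hE ((⊤ : G.Subgraph).induce s)
    rw [Subgraph.induce_verts, Set.ncard_coe_finset] at this
    rw [sum_card_filter_adj_eq_two_mul_ncard_edgeSet_induce]
    omega
  exact ⟨v, hv, le_min (G.card_filter_adj_le_card_sub_one hv)
    ((Nat.le_div_iff_mul_le hs.card_pos).2 (h_avg.trans h_sum))⟩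

theorem card_cliqueFinset_filter_mem_le [Fintype V] (r : ℕ) (s : Finset V) (v : V) :
    #{t ∈ G.cliqueFinset (r + 1) | t ⊆ s ∧ v ∈ t} ≤ (#{u ∈ s | G.Adj v u}).choose r := by
  rw [← card_powersetCard]
  refine card_le_card_of_injOn (·.erase v) (fun t ht => ?_) (fun t ht t' ht' h => ?_)
  · simp only [coe_filter, mem_cliqueFinset_iff, Set.mem_ofPred_eq] at ht
    obtain ⟨ht_clique, hts, hvt⟩ := ht
    rw [mem_coe, mem_powersetCard, card_erase_of_mem hvt, ht_clique.card_eq]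
    refine ⟨fun u hu => ?_, rfl⟩
    rw [mem_erase] at hu
    exact mem_filter.2 ⟨hts hu.2, ht_clique.1 hvt hu.2 hu.1.symm⟩
  · simp only [coe_filter, Set.mem_ofPred_eq] at ht ht'
    rw [← insert_erase ht.2.2, ← insert_erase ht'.2.2]
    exact congrArg (insert v) h

theorem card_cliqueFinset_filter_subset_le [Fintype V] {r : ℕ} {D : ℕ → ℕ}
    (hD : ∀ s : Finset V, s.Nonempty → ∃ v ∈ s, #{u ∈ s | G.Adj v u} ≤ D #s) (s : Finset V) :
    #{t ∈ G.cliqueFinset (r + 1) | t ⊆ s} ≤ ∑ k ∈ Icc 1 #s, (D k).choose r := by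
  induction s using Finset.strongInduction with | H s ih => ?_
  rcases s.eq_empty_or_nonempty with rfl | hs
  · simpa using fun t ht h => by simpa [h] using ht.card_eq
  obtain ⟨v, hv, hv_deg⟩ := hD s hs
  have h_split : {t ∈ G.cliqueFinset (r + 1) | t ⊆ s} ⊆
      {t ∈ G.cliqueFinset (r + 1) | t ⊆ s.erase v} ∪
        {t ∈ G.cliqueFinset (r + 1) | t ⊆ s ∧ v ∈ t} := by
    intro t
    simp only [mem_union, mem_filter, subset_erase]
    tauto
  have h_card : #s = #(s.erase v) + 1 := (card_erase_add_one hv).symm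
  calc #{t ∈ G.cliqueFinset (r + 1) | t ⊆ s}
      ≤ #{t ∈ G.cliqueFinset (r + 1) | t ⊆ s.erase v}
          + #{t ∈ G.cliqueFinset (r + 1) | t ⊆ s ∧ v ∈ t} :=
        (card_le_card h_split).trans (card_union_le _ _)
    _ ≤ ∑ k ∈ Icc 1 #(s.erase v), (D k).choose r + (D #s).choose r :=
        add_le_add (ih _ (erase_ssubset hv))
          ((G.card_cliqueFinset_filter_mem_le r s v).trans (Nat.choose_le_choose r hv_deg))
    _ = ∑ k ∈ Icc 1 #s, (D k).choose r := by rw [h_card, sum_Icc_succ_top (by omega)]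

end SimpleGraph

theorem Nat.sum_Icc_choose_pred (r n : ℕ) : ∑ k ∈ Icc 1 n, (k - 1).choose r = n.choose (r + 1) := by
  induction n with
  | zero => simp
  | succ n ih => rw [sum_Icc_succ_top (by omega), ih, Nat.choose_succ_succ', add_comm]; simp

theorem Nat.cast_choose_four_le (n : ℕ) : (n.choose 4 : ℝ) ≤ ((n : ℝ) - 3 / 2) ^ 4 / 24 := by
  have h_int : 0 ≤ ((n : ℝ) - 1) * ((n : ℝ) - 2) := by
    rcases le_or_gt n 1 with h | h
    · have : (n : ℝ) ≤ 1 := by exact_mod_cast h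
      nlinarith
    · have : (2 : ℝ) ≤ n := by exact_mod_cast h
      nlinarith
  rw [Nat.cast_choose_eq_descPochhammer_div]
  simp [descPochhammer_succ_right, Nat.factorial]
  nlinarith

theorem Nat.cast_choose_three_le_of_mul_le {q k g : ℕ} (hk : 0 < k) (h : q * k ≤ 6 * (k + g)) :
    (q.choose 3 : ℝ) ≤ 36 * (1 + g / k) ^ 3 := by
  have hk' : (0 : ℝ) < k := by exact_mod_cast hk
  have hq : (q : ℝ) ≤ 6 * (1 + g / k) := by
    rw [show (6 : ℝ) * (1 + g / k) = 6 * (k + g) / k by field_simp, le_div_iff₀ hk']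
    exact_mod_cast h
  calc (q.choose 3 : ℝ) ≤ (q : ℝ) ^ 3 / Nat.factorial 3 := Nat.choose_le_pow_div 3 q
    _ ≤ (6 * (1 + g / k)) ^ 3 / 6 := by gcongr; norm_num
    _ = 36 * (1 + g / k) ^ 3 := by ring

section InvCube

variable {α : Type*} [Field α] [LinearOrder α] [IsStrictOrderedRing α]

theorem sum_Ioc_inv_cube_le_sub {k n : ℕ} (hk : k ≠ 0) (h : k ≤ n) :
    (∑ i ∈ Ioc k n, ((i : α) ^ 3)⁻¹) ≤ (2 * (k : α) ^ 2)⁻¹ - (2 * (n : α) ^ 2)⁻¹ := by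
  refine Nat.le_induction (by simp) (fun n hn IH => ?_) n h
  rw [sum_Ioc_succ_top hn]
  have hn' : (1 : α) ≤ n := by exact_mod_cast (Nat.one_le_iff_ne_zero.2 hk).trans hn
  have step : (((n : α) + 1) ^ 3)⁻¹ ≤ (2 * (n : α) ^ 2)⁻¹ - (2 * ((n : α) + 1) ^ 2)⁻¹ := by
    rw [inv_eq_one_div, inv_eq_one_div, inv_eq_one_div,
      div_sub_div _ _ (by positivity) (by positivity), div_le_div_iff₀ (by positivity) (by positivity)]
    nlinarith
  push_cast
  linarith

end InvCube

theorem sum_Ioc_one_add_div_cube_le {A n : ℕ} (hA : 0 < A) {g : ℝ} (hg : 0 ≤ g) :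
    ∑ k ∈ Ioc A n, 36 * (1 + g / k) ^ 3 ≤
      36 * n + 108 * g * (Real.log n + 1) + 108 * g ^ 2 / A + 18 * g ^ 3 / A ^ 2 := by
  rcases lt_or_ge n A with hnA | hAn
  · rw [Ioc_eq_empty_of_le hnA.le, sum_empty]
    have := Real.log_natCast_nonneg n
    positivity
  have h_harm : ∑ k ∈ Ioc A n, (k : ℝ)⁻¹ ≤ Real.log n + 1 := by
    calc ∑ k ∈ Ioc A n, (k : ℝ)⁻¹ ≤ ∑ k ∈ Icc 1 n, (k : ℝ)⁻¹ :=
          sum_le_sum_of_subset_of_nonneg (fun k hk => by simp at hk ⊢; omega)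
            (fun _ _ _ => by positivity)
      _ = harmonic n := by simp [harmonic_eq_sum_Icc]
      _ ≤ Real.log n + 1 := by linarith [harmonic_le_one_add_log n]
  have h_sq := sum_Ioc_inv_sq_le_sub (α := ℝ) hA.ne' hAn
  have h_cube := sum_Ioc_inv_cube_le_sub (α := ℝ) hA.ne' hAn
  calc ∑ k ∈ Ioc A n, 36 * (1 + g / k) ^ 3
      = 36 * (#(Ioc A n) : ℕ) + 108 * g * ∑ k ∈ Ioc A n, (k : ℝ)⁻¹
          + 108 * g ^ 2 * ∑ k ∈ Ioc A n, ((k : ℝ) ^ 2)⁻¹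
          + 36 * g ^ 3 * ∑ k ∈ Ioc A n, ((k : ℝ) ^ 3)⁻¹ := by
        rw [show (36 : ℝ) * (#(Ioc A n) : ℕ) = ∑ _k ∈ Ioc A n, 36 by
          rw [sum_const, nsmul_eq_mul, mul_comm]]
        simp only [mul_sum, ← sum_add_distrib]
        exact sum_congr rfl fun k _ => by ring
    _ ≤ 36 * n + 108 * g * (Real.log n + 1) + 108 * g ^ 2 * (A : ℝ)⁻¹
          + 36 * g ^ 3 * (2 * (A : ℝ) ^ 2)⁻¹ := by
        gcongr
        · simp
        · exact h_sq.trans (sub_le_self _ (by positivity))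
        · exact h_cube.trans (sub_le_self _ (by positivity))
    _ = _ := by ring

theorem sum_Icc_choose_three_le {g : ℕ} (hg : 1 ≤ g) (n : ℕ) {d : ℕ → ℕ}
    (hd_pred : ∀ k, d k ≤ k - 1) (hd_avg : ∀ k, d k * k ≤ 6 * (k + g)) :
    ((∑ k ∈ Icc 1 n, (d k).choose 3 : ℕ) : ℝ) ≤
      (283 / 24) * (g : ℝ) ^ 2 + 27 * (g : ℝ) ^ ((3 : ℝ) / 2) +
        108 * (g : ℝ) * (Real.log n + 1) + 36 * (n : ℝ) := by
  set u := √(g : ℝ)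
  have hu_sq : u ^ 2 = g := Real.sq_sqrt (Nat.cast_nonneg g)
  have hu : 1 ≤ u := Real.one_le_sqrt.2 (by exact_mod_cast hg)
  have hg_rpow : (g : ℝ) ^ ((3 : ℝ) / 2) = u ^ 3 := by
    rw [← hu_sq, ← Real.rpow_natCast, ← Real.rpow_mul (by positivity)]
    norm_num
  set A := ⌈4 * u⌉₊
  have hA_ge : 4 * u ≤ A := Nat.le_ceil _
  have hA_lt : (A : ℝ) < 4 * u + 1 := Nat.ceil_lt_add_one (by positivity)
  have hA_pos : 0 < A := by exact_mod_cast (by linarith : (0 : ℝ) < A)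
  have h_split : ∑ k ∈ Icc 1 n, (d k).choose 3 ≤
      ∑ k ∈ Icc 1 A, (d k).choose 3 + ∑ k ∈ Ioc A n, (d k).choose 3 := by
    rw [← sum_union (disjoint_left.2 fun k hk hk' => by simp at hk hk'; omega)]
    exact sum_le_sum_of_subset fun k hk => by simp at hk ⊢; omega
  have h_head : ((∑ k ∈ Icc 1 A, (d k).choose 3 : ℕ) : ℝ) ≤ 32 / 3 * (g : ℝ) ^ 2 := by
    have : ∑ k ∈ Icc 1 A, (d k).choose 3 ≤ A.choose 4 :=
      (sum_le_sum fun k _ => Nat.choose_le_choose 3 (hd_pred k)).trans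
        (Nat.sum_Icc_choose_pred 3 A).le
    calc ((∑ k ∈ Icc 1 A, (d k).choose 3 : ℕ) : ℝ) ≤ (A.choose 4 : ℝ) := by exact_mod_cast this
      _ ≤ ((A : ℝ) - 3 / 2) ^ 4 / 24 := Nat.cast_choose_four_le A
      _ ≤ (4 * u) ^ 4 / 24 := by gcongr; linarith; linarith
      _ = 32 / 3 * (g : ℝ) ^ 2 := by rw [← hu_sq]; ring
  have h_tail : ((∑ k ∈ Ioc A n, (d k).choose 3 : ℕ) : ℝ) ≤
      36 * n + 108 * g * (Real.log n + 1) + 27 * u ^ 3 + 9 / 8 * (g : ℝ) ^ 2 := by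
    calc ((∑ k ∈ Ioc A n, (d k).choose 3 : ℕ) : ℝ) ≤ ∑ k ∈ Ioc A n, 36 * (1 + (g : ℝ) / k) ^ 3 := by
          push_cast
          exact sum_le_sum fun k hk =>
            Nat.cast_choose_three_le_of_mul_le (hA_pos.trans (mem_Ioc.1 hk).1) (hd_avg k)
      _ ≤ 36 * n + 108 * g * (Real.log n + 1) + 108 * (g : ℝ) ^ 2 / A + 18 * (g : ℝ) ^ 3 / A ^ 2 :=
          sum_Ioc_one_add_div_cube_le hA_pos (Nat.cast_nonneg g)
      _ ≤ 36 * n + 108 * g * (Real.log n + 1) + 108 * (g : ℝ) ^ 2 / (4 * u)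
            + 18 * (g : ℝ) ^ 3 / (4 * u) ^ 2 := by gcongr
      _ = _ := by rw [← hu_sq]; field_simp; ring
  rw [hg_rpow]
  calc ((∑ k ∈ Icc 1 n, (d k).choose 3 : ℕ) : ℝ)
      ≤ ((∑ k ∈ Icc 1 A, (d k).choose 3 : ℕ) : ℝ) + ((∑ k ∈ Ioc A n, (d k).choose 3 : ℕ) : ℝ) := by
        exact_mod_cast h_split
    _ ≤ _ := by linarith

theorem stmt7_general {V : Type*} [Fintype V] [DecidableEq V]
    (G : SimpleGraph V) [DecidableRel G.Adj]
    (g : ℕ) (hg : 1 ≤ g)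
    (hE : ∀ H : G.Subgraph, H.edgeSet.ncard ≤ 3 * (H.verts.ncard + g)) :
    ((G.cliqueFinset 4).card : ℝ) ≤
      (283 / 24) * (g : ℝ) ^ 2 + 27 * (g : ℝ) ^ ((3 : ℝ) / 2) +
        108 * (g : ℝ) * (Real.log (Fintype.card V) + 1) + 36 * (Fintype.card V : ℝ) := by
  have h_count := G.card_cliqueFinset_filter_subset_le (r := 3)
    (D := fun k => min (k - 1) (6 * (k + g) / k))
    (fun s hs => G.exists_card_filter_adj_le_of_ncard_edgeSet_le hE hs) univ
  rw [filter_true_of_mem fun t _ => subset_univ t, card_univ] at h_count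
  exact (Nat.cast_le.2 h_count).trans <| sum_Icc_choose_three_le hg _
    (fun k => min_le_left _ _)
    (fun k => (Nat.mul_le_mul_right k (min_le_right _ _)).trans (Nat.div_mul_le_self _ _))

/-- If `g ≥ 1` and every subgraph `H` of an `n`-vertex graph `G` (with `n ≥ 1`) satisfies
`|E(H)| ≤ 3(|V(H)| + g)`, then the number of copies of `K₄` in `G` is at most
`(283/24)·g² + 27·g^{3/2} + 108g(ln n + 1) + 36n`. -/
theorem stmt7 {V : Type*} [Fintype V] [DecidableEq V]
    (G : SimpleGraph V) [DecidableRel G.Adj]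
    (g : ℕ) (hg : 1 ≤ g) (hn : 1 ≤ Fintype.card V)
    (hE : ∀ H : G.Subgraph, H.edgeSet.ncard ≤ 3 * (H.verts.ncard + g)) :
    ((G.cliqueFinset 4).card : ℝ) ≤
      (283 / 24) * (g : ℝ) ^ 2 + 27 * (g : ℝ) ^ ((3 : ℝ) / 2) +
        108 * (g : ℝ) * (Real.log (Fintype.card V) + 1) + 36 * (Fintype.card V : ℝ) :=
  stmt7_general G g hg hE
end

section
/- Let s ≥ 5 and g ≥ 1 be integers, and let G be a graph with n vertices such that n ≤ 13g and every subgraph H of G satisfies |E(H)| ≤ 3(|V(H)| + g). Then the number of copies of K_s in G is at most (300·√g / s)^s. -/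
/-!
Since `G` has at most `13g` vertices, it has at most `42g` edges, fewer than `C(k, 2)` for
`k = 10(⌊√g⌋ + 1)`. By the Lovász form of the Kruskal–Katona theorem, at least `C(k, s)` copies
of `K_s` would force at least `C(k, 2)` copies of `K_2`, i.e. edges, as these contain the
`(s - 2)`-fold shadow of the `s`-cliques. Hence there are fewer than `C(k, s) ≤ (e k / s)^s`
copies of `K_s`, and `e k ≤ 60√g`.
-/

open SimpleGraph

open Finset Nat

open scoped FinsetFamily

namespace Finset

variable {α β : Type*} [DecidableEq α] [DecidableEq β]

lemma shadow_map (f : α ↪ β) (𝒜 : Finset (Finset α)) :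
    ∂ (𝒜.map (mapEmbedding f).toEmbedding) = (∂ 𝒜).map (mapEmbedding f).toEmbedding := by
  ext t
  simp [mem_shadow_iff, map_erase, and_assoc]

lemma shadow_iterate_map (f : α ↪ β) (𝒜 : Finset (Finset α)) (i : ℕ) :
    ∂^[i] (𝒜.map (mapEmbedding f).toEmbedding) = (∂^[i] 𝒜).map (mapEmbedding f).toEmbedding := by
  induction i generalizing 𝒜 with
  | zero => rfl
  | succ i ih => rw [Function.iterate_succ_apply, Function.iterate_succ_apply, shadow_map, ih]

theorem kruskal_katona_lovasz_form_of_fintype [Fintype α] {𝒜 : Finset (Finset α)} {i r k : ℕ}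
    (hir : i ≤ r) (hrk : r ≤ k) (h₁ : (𝒜 : Set (Finset α)).Sized r) (h₂ : k.choose r ≤ #𝒜) :
    k.choose (r - i) ≤ #(∂^[i] 𝒜) := by
  -- the `Fin n` version needs `k ≤ n`, hence the `k` extra points
  let e : α ↪ Fin (Fintype.card α + k) :=
    (Fintype.equivFin α).toEmbedding.trans (Fin.castLEEmb (Nat.le_add_right _ _))
  set ℬ : Finset (Finset (Fin (Fintype.card α + k))) := 𝒜.map (mapEmbedding e).toEmbedding
  have h₁' : (ℬ : Set (Finset (Fin (Fintype.card α + k)))).Sized r := by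
    simpa [ℬ, Set.Sized] using h₁
  have := kruskal_katona_lovasz_form hir hrk (Nat.le_add_left _ _) h₁' (by simpa [ℬ] using h₂)
  simpa [ℬ, shadow_iterate_map] using this

end Finset

namespace SimpleGraph

variable {V : Type*} [Fintype V] [DecidableEq V] (G : SimpleGraph V) [DecidableRel G.Adj]

lemma shadow_cliqueFinset_subset (n : ℕ) : ∂ (G.cliqueFinset n) ⊆ G.cliqueFinset (n - 1) := by
  intro t ht
  obtain ⟨s, hs, a, ha, rfl⟩ := mem_shadow_iff.1 ht
  exact mem_cliqueFinset_iff.2 ((mem_cliqueFinset_iff.1 hs).erase_of_mem ha)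

lemma shadow_iterate_cliqueFinset_subset (n i : ℕ) :
    ∂^[i] (G.cliqueFinset n) ⊆ G.cliqueFinset (n - i) := by
  induction i with
  | zero => rfl
  | succ i ih =>
    rw [Function.iterate_succ_apply']
    exact (shadow_mono ih).trans (G.shadow_cliqueFinset_subset _)

lemma card_cliqueFinset_two_le_card_edgeFinset : #(G.cliqueFinset 2) ≤ #G.edgeFinset := by
  refine card_le_card_of_surjOn Sym2.toFinset ?_
  intro t ht
  have ht := mem_cliqueFinset_iff.1 ht
  obtain ⟨a, b, hab, rfl⟩ := card_eq_two.1 ht.card_eq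
  exact ⟨s(a, b), by simpa using ht.isClique (by simp) (by simp) hab, Sym2.toFinset_mk_eq⟩

theorem card_cliqueFinset_lt_choose {s k : ℕ} (hs : 2 ≤ s) (hsk : s ≤ k)
    (hE : #G.edgeFinset < k.choose 2) : #(G.cliqueFinset s) < k.choose s := by
  by_contra! h
  have hshadow := kruskal_katona_lovasz_form_of_fintype (Nat.sub_le s 2) hsk
    (fun _ ht ↦ (mem_cliqueFinset_iff.1 ht).card_eq) h
  rw [Nat.sub_sub_self hs] at hshadow
  have hcliques := card_le_card (G.shadow_iterate_cliqueFinset_subset s (s - 2))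
  rw [Nat.sub_sub_self hs] at hcliques
  have := G.card_cliqueFinset_two_le_card_edgeFinset
  omega

end SimpleGraph

theorem Nat.choose_le_exp_one_mul_div_pow (n k : ℕ) :
    (n.choose k : ℝ) ≤ (Real.exp 1 * n / k) ^ k := by
  have hk : (0 : ℝ) < (k : ℝ) ^ k := by exact_mod_cast Nat.pow_self_pos
  have hfact : (k : ℝ) ^ k ≤ Real.exp 1 ^ k * k ! := by
    have := Real.pow_div_factorial_le_exp (k : ℝ) (Nat.cast_nonneg k) k
    rw [div_le_iff₀ (by positivity), ← Real.exp_one_pow] at this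
    exact this
  calc (n.choose k : ℝ) ≤ n ^ k / k ! := Nat.choose_le_pow_div k n
    _ ≤ (Real.exp 1 * n / k) ^ k := by
      rw [div_pow, mul_pow, div_le_div_iff₀ (by positivity) hk]
      nlinarith [pow_nonneg (Nat.cast_nonneg (α := ℝ) n) k]

lemma forty_two_mul_lt_choose_two (g : ℕ) : 42 * g < (10 * (Nat.sqrt g + 1)).choose 2 := by
  have hg := Nat.lt_succ_sqrt g
  have h : 10 * (Nat.sqrt g + 1) * (10 * (Nat.sqrt g + 1) - 1) =
      2 * (5 * (Nat.sqrt g + 1) * (10 * Nat.sqrt g + 9)) := by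
    rw [show 10 * (Nat.sqrt g + 1) - 1 = 10 * Nat.sqrt g + 9 by omega]; ring
  rw [Nat.choose_two_right, h, Nat.mul_div_cancel_left _ two_pos]
  nlinarith

lemma ten_mul_sqrt_add_one_le {g : ℕ} (hg : 1 ≤ g) : (10 * (Nat.sqrt g + 1) : ℝ) ≤ 20 * √g := by
  have ht : (Nat.sqrt g : ℝ) ≤ √g := by
    rw [Real.le_sqrt (by positivity) (by positivity)]
    exact_mod_cast Nat.sqrt_le' g
  have h1 : (1 : ℝ) ≤ √g := Real.one_le_sqrt.2 (by exact_mod_cast hg)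
  linarith

/-- If `s ≥ 5`, `g ≥ 1`, `G` has `n ≤ 13g` vertices and every subgraph `H` of `G` satisfies
`|E(H)| ≤ 3(|V(H)| + g)`, then the number of copies of `K_s` in `G` is at most
`(300√g / s)^s`. -/
theorem stmt8 {V : Type*} [Fintype V] [DecidableEq V]
    (G : SimpleGraph V) [DecidableRel G.Adj]
    (s g : ℕ) (hs : 5 ≤ s) (hg : 1 ≤ g)
    (hn : Fintype.card V ≤ 13 * g)
    (hE : ∀ H : G.Subgraph, H.edgeSet.ncard ≤ 3 * (H.verts.ncard + g)) :
    ((G.cliqueFinset s).card : ℝ) ≤ ((300 * Real.sqrt g) / s) ^ s := by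
  set k := 10 * (Nat.sqrt g + 1)
  have hedges : #G.edgeFinset < k.choose 2 := by
    have h := hE ⊤
    rw [Subgraph.edgeSet_top, Subgraph.verts_top, Set.ncard_univ, Nat.card_eq_fintype_card,
      ← coe_edgeFinset, Set.ncard_coe_finset] at h
    have : 42 * g < k.choose 2 := forty_two_mul_lt_choose_two g
    omega
  rcases le_or_gt s k with hsk | hks
  · have hk : Real.exp 1 * k ≤ 300 * √g := by
      have := ten_mul_sqrt_add_one_le hg
      have := Real.exp_one_lt_d9
      push_cast [k]
      nlinarith [Real.sqrt_nonneg g]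
    calc (#(G.cliqueFinset s) : ℝ) ≤ k.choose s := by
          exact_mod_cast (G.card_cliqueFinset_lt_choose (by omega) hsk hedges).le
      _ ≤ (Real.exp 1 * k / s) ^ s := Nat.choose_le_exp_one_mul_div_pow k s
      _ ≤ (300 * √g / s) ^ s := by gcongr
  · have h := G.card_cliqueFinset_lt_choose (by omega) le_rfl
      (hedges.trans_le (Nat.choose_le_choose 2 hks.le))
    rw [Nat.choose_self, Nat.lt_one_iff] at h
    rw [h, Nat.cast_zero]
    positivity
end

section
/- Let T be a tree, let I be a stable set of vertices of T each of degree at most 2 in T, and let q ≥ 1 be an integer. Let G be the graph with vertex set (V(T) \ I) ⊔ (I × {1, …, q}) in which: two vertices u, w ∈ V(T) \ I are adjacent if and only if uw ∈ E(T); a vertex u ∈ V(T) \ I and a vertex (v, j) ∈ I × {1, …, q} are adjacent if and only if uv ∈ E(T); and no two vertices of I × {1, …, q} are adjacent. Then |V(G)| = |V(T)| + (q − 1)|I| and G contains at least q^{|I|} distinct subgraphs isomorphic to T. -/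
/-!
Every choice `f : I → Fin q` of one clone per vertex of `I` yields a copy of `T` in `G`: keep
the vertices outside `I` and send `v ∈ I` to its clone `(v, f v)`. This is a homomorphism
because `I` is stable, so every edge of `T` has an end outside `I`. Distinct choices give
distinct vertex sets, hence distinct subgraphs.
-/

open SimpleGraph Function

section CloneMap

variable {V β : Type*} (I : Set V)

open Classical in
noncomputable def cloneMap (f : I → β) (v : V) : ↥Iᶜ ⊕ (↥I × β) :=
  if h : v ∈ I then .inr (⟨v, h⟩, f ⟨v, h⟩) else .inl ⟨v, h⟩

lemma cloneMap_of_mem (f : I → β) {v : V} (h : v ∈ I) :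
    cloneMap I f v = .inr (⟨v, h⟩, f ⟨v, h⟩) := by
  simp [cloneMap, h]

lemma cloneMap_of_notMem (f : I → β) {v : V} (h : v ∉ I) :
    cloneMap I f v = .inl ⟨v, h⟩ := by
  simp [cloneMap, h]

lemma cloneMap_injective (f : I → β) : Injective (cloneMap I f) := by
  intro a b hab
  by_cases ha : a ∈ I <;> by_cases hb : b ∈ I <;>
    simp_all [cloneMap_of_mem, cloneMap_of_notMem]

lemma inr_mem_range_cloneMap_iff (f : I → β) (v : I) (b : β) :
    .inr (v, b) ∈ Set.range (cloneMap I f) ↔ f v = b := by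
  constructor
  · rintro ⟨w, hw⟩
    by_cases hwI : w ∈ I
    · rw [cloneMap_of_mem I f hwI] at hw
      obtain ⟨rfl, rfl⟩ := Prod.mk.inj (Sum.inr_injective hw)
      rfl
    · simp [cloneMap_of_notMem I f hwI] at hw
  · rintro rfl
    exact ⟨v, cloneMap_of_mem I f v.2⟩

lemma range_cloneMap_injective : Injective fun f : I → β ↦ Set.range (cloneMap I f) := by
  intro f g hfg
  funext v
  have hv : .inr (v, f v) ∈ Set.range (cloneMap I g) := by
    simpa only [hfg] using (inr_mem_range_cloneMap_iff I f v (f v)).2 rfl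
  exact ((inr_mem_range_cloneMap_iff I g v (f v)).1 hv).symm

end CloneMap

section CloneCopy

variable {V β : Type*} (T : SimpleGraph V) {I : Set V} (hstab : ∀ u ∈ I, ∀ w ∈ I, ¬ T.Adj u w)
  (G : SimpleGraph (↥Iᶜ ⊕ (↥I × β)))
  (hG1 : ∀ u w : ↥Iᶜ, T.Adj u w → G.Adj (.inl u) (.inl w))
  (hG2 : ∀ (u : ↥Iᶜ) (p : ↥I × β), T.Adj u p.1 → G.Adj (.inl u) (.inr p))

include hstab hG1 hG2 in
lemma cloneMap_adj (f : I → β) {a b : V} (hab : T.Adj a b) :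
    G.Adj (cloneMap I f a) (cloneMap I f b) := by
  by_cases ha : a ∈ I <;> by_cases hb : b ∈ I
  · exact absurd hab (hstab a ha b hb)
  · rw [cloneMap_of_mem I f ha, cloneMap_of_notMem I f hb]
    exact (hG2 ⟨b, hb⟩ _ hab.symm).symm
  · rw [cloneMap_of_notMem I f ha, cloneMap_of_mem I f hb]
    exact hG2 ⟨a, ha⟩ _ hab
  · rw [cloneMap_of_notMem I f ha, cloneMap_of_notMem I f hb]
    exact hG1 ⟨a, ha⟩ ⟨b, hb⟩ hab

noncomputable def cloneCopy (f : I → β) : Copy T G :=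
  ⟨⟨cloneMap I f, cloneMap_adj T hstab G hG1 hG2 f⟩, cloneMap_injective I f⟩

lemma cloneCopy_toSubgraph_injective :
    Injective fun f : I → β ↦ (cloneCopy T hstab G hG1 hG2 f).toSubgraph := by
  intro f g hfg
  apply range_cloneMap_injective I
  simpa [Copy.toSubgraph, Subgraph.map_verts, Set.image_univ, cloneCopy] using
    congrArg Subgraph.verts hfg

end CloneCopy

lemma Copy.card_le_card_subgraph_iso {α β ι : Type*} [Finite β] {A : SimpleGraph α}
    {B : SimpleGraph β} (c : ι → Copy A B) (hc : Injective fun i ↦ (c i).toSubgraph) :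
    Nat.card ι ≤ Nat.card {B' : B.Subgraph // Nonempty (B'.coe ≃g A)} :=
  Nat.card_le_card_of_injective (fun i ↦ ⟨(c i).toSubgraph, ⟨(c i).isoToSubgraph.symm⟩⟩)
    fun _ _ h ↦ hc (congrArg Subtype.val h)

lemma card_sum_compl_prod_fin {V : Type*} [Fintype V] (I : Set V) {q : ℕ} (hq : 1 ≤ q) :
    Nat.card (↥Iᶜ ⊕ (↥I × Fin q)) = Fintype.card V + (q - 1) * I.ncard := by
  have hsplit : I.ncard + Iᶜ.ncard = Fintype.card V := by
    rw [Set.ncard_add_ncard_compl, Nat.card_eq_fintype_card]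
  obtain ⟨k, rfl⟩ := Nat.exists_eq_add_of_le hq
  rw [Nat.card_sum, Nat.card_prod, Nat.card_coe_set_eq, Nat.card_coe_set_eq, Nat.card_fin,
    Nat.add_sub_cancel_left, ← hsplit]
  ring

theorem stmt10_general {V : Type*} [Fintype V] (T : SimpleGraph V)
    (I : Set V)
    (hstab : ∀ u ∈ I, ∀ w ∈ I, ¬ T.Adj u w)
    (q : ℕ) (hq : 1 ≤ q)
    (G : SimpleGraph ((↥(Iᶜ)) ⊕ (↥I × Fin q)))
    (hG1 : ∀ u w : ↥(Iᶜ), G.Adj (Sum.inl u) (Sum.inl w) ↔ T.Adj ↑u ↑w)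
    (hG2 : ∀ u : ↥(Iᶜ), ∀ p : ↥I × Fin q,
      G.Adj (Sum.inl u) (Sum.inr p) ↔ T.Adj ↑u ↑p.1) :
    Nat.card ((↥(Iᶜ)) ⊕ (↥I × Fin q)) = Fintype.card V + (q - 1) * I.ncard ∧
      q ^ I.ncard ≤ Nat.card {G' : G.Subgraph // Nonempty (G'.coe ≃g T)} := by
  refine ⟨card_sum_compl_prod_fin I hq, ?_⟩
  have hchoices : Nat.card (↥I → Fin q) = q ^ I.ncard := by
    rw [Nat.card_fun, Nat.card_fin, Nat.card_coe_set_eq]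
  have hG1' u w := (hG1 u w).2
  have hG2' u p := (hG2 u p).2
  exact hchoices ▸ Copy.card_le_card_subgraph_iso _
    (cloneCopy_toSubgraph_injective T hstab G hG1' hG2')

/-- Blow-up construction: let `T` be a tree, `I` a stable set of vertices of degree at most 2,
and `q ≥ 1`. Let `G` be the graph on `(V(T) \ I) ⊔ (I × {1,…,q})` in which two old vertices
are adjacent iff they are adjacent in `T`, an old vertex `u` and a clone `(v, j)` are adjacent
iff `uv ∈ E(T)`, and no two clones are adjacent. Then `|V(G)| = |V(T)| + (q−1)|I|` and `G`
contains at least `q^{|I|}` distinct subgraphs isomorphic to `T`. -/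
theorem stmt10 {V : Type*} [Fintype V] (T : SimpleGraph V) (hT : T.IsTree)
    (I : Set V)
    (hdeg : ∀ v ∈ I, (T.neighborSet v).ncard ≤ 2)
    (hstab : ∀ u ∈ I, ∀ w ∈ I, ¬ T.Adj u w)
    (q : ℕ) (hq : 1 ≤ q)
    (G : SimpleGraph ((↥(Iᶜ)) ⊕ (↥I × Fin q)))
    (hG1 : ∀ u w : ↥(Iᶜ), G.Adj (Sum.inl u) (Sum.inl w) ↔ T.Adj ↑u ↑w)
    (hG2 : ∀ u : ↥(Iᶜ), ∀ p : ↥I × Fin q,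
      G.Adj (Sum.inl u) (Sum.inr p) ↔ T.Adj ↑u ↑p.1)
    (hG3 : ∀ p p' : ↥I × Fin q, ¬ G.Adj (Sum.inr p) (Sum.inr p')) :
    Nat.card ((↥(Iᶜ)) ⊕ (↥I × Fin q)) = Fintype.card V + (q - 1) * I.ncard ∧
      q ^ I.ncard ≤ Nat.card {G' : G.Subgraph // Nonempty (G'.coe ≃g T)} :=
  stmt10_general T I hstab q hq G hG1 hG2
end
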